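/- arXiv:math/0507135 — 6 statements merged into one kernel-verified Lean document; each statement's English description precedes it below -/
import Mathlib

section
/- With the same setup, for the full index range one has ∑_{i=1}^{h} (d_i/d_{i+1} - 1)·r_i = r_h·d_h - m_h, and consequently the Milnor number μ = ∑_{i=1}^{h} (d_i/d_{i+1} - 1)·r_i - r_0 + 1 equals r_h·d_h - m_h - r_0 + 1. -/
/-! The recurrence for `m` says `r (k+1) * (e (k+1) - 1) = (r (k+1) * e (k+1) - m (k+1)) - (r k * e k - m k)`,
and `m 1 = r 1` gives `r 1 * (e 1 - 1) = r 1 * e 1 - m 1`, so the sum telescopes to `r h * e h - m h`;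
at the top index `e h = d h / d (h+1) = d h`. -/

theorem sum_Icc_sub_one_mul_eq_of_step {R : Type*} [CommRing R] (r e m : ℕ → R) {n : ℕ}
    (hn : 1 ≤ n) (hm1 : m 1 = r 1)
    (hstep : ∀ k, 1 ≤ k → k < n → r (k + 1) + m k = r k * e k + m (k + 1)) :
    ∑ i ∈ Finset.Icc 1 n, (e i - 1) * r i = r n * e n - m n := by
  induction n, hn using Nat.le_induction with
  | base => rw [Finset.Icc_self, Finset.sum_singleton, hm1]; ring
  | succ n hn ih =>
    rw [Finset.sum_Icc_succ_top (by omega), ih fun k hk1 hkn => hstep k hk1 (by omega)]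
    linear_combination -hstep n hn (by omega)

theorem stmt1_general (h : ℕ) (r d m : ℕ → ℕ) (hh : 1 ≤ h)
    (hdh1 : d (h + 1) = 1)
    (hm1 : m 1 = r 1)
    (hm : ∀ k, 1 ≤ k → k ≤ h - 1 →
      r (k + 1) + m k = r k * (d k / d (k + 1)) + m (k + 1)) :
    (∑ i ∈ Finset.Icc 1 h, (((d i / d (i + 1) : ℕ) : ℤ) - 1) * (r i : ℤ))
        = (r h : ℤ) * (d h : ℤ) - (m h : ℤ) ∧
    (∑ i ∈ Finset.Icc 1 h, (((d i / d (i + 1) : ℕ) : ℤ) - 1) * (r i : ℤ)) - (r 0 : ℤ) + 1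
        = (r h : ℤ) * (d h : ℤ) - (m h : ℤ) - (r 0 : ℤ) + 1 := by
  have hsum := sum_Icc_sub_one_mul_eq_of_step (fun i => (r i : ℤ))
    (fun i => ((d i / d (i + 1) : ℕ) : ℤ)) (fun i => (m i : ℤ)) hh (by exact_mod_cast hm1)
    fun k hk1 hkh => by exact_mod_cast hm k hk1 (by omega)
  simp only [hdh1, Nat.div_one] at hsum
  exact ⟨hsum, by rw [hsum]⟩

/-- With the characteristic-sequence setup,
`∑_{i=1}^{h} (d i / d (i+1) - 1) * r i = r h * d h - m h`, and consequently the
Milnor number `μ = ∑_{i=1}^{h} (d i / d (i+1) - 1) * r i - r 0 + 1` equals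
`r h * d h - m h - r 0 + 1` (stated in `ℤ` to allow subtraction). -/
theorem stmt1 (h : ℕ) (r d m : ℕ → ℕ) (hh : 1 ≤ h)
    (hrpos : ∀ k, k ≤ h → 0 < r k)
    (hrmono : ∀ k, k ≤ h - 1 → r k < r (k + 1))
    (hd1 : d 1 = r 0)
    (hd : ∀ k, 1 ≤ k → k ≤ h → d (k + 1) = Nat.gcd (d k) (r k))
    (hdh1 : d (h + 1) = 1)
    (hm1 : m 1 = r 1)
    (hm : ∀ k, 1 ≤ k → k ≤ h - 1 →
      r (k + 1) + m k = r k * (d k / d (k + 1)) + m (k + 1)) :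
    (∑ i ∈ Finset.Icc 1 h, (((d i / d (i + 1) : ℕ) : ℤ) - 1) * (r i : ℤ))
        = (r h : ℤ) * (d h : ℤ) - (m h : ℤ) ∧
    (∑ i ∈ Finset.Icc 1 h, (((d i / d (i + 1) : ℕ) : ℤ) - 1) * (r i : ℤ)) - (r 0 : ℤ) + 1
        = (r h : ℤ) * (d h : ℤ) - (m h : ℤ) - (r 0 : ℤ) + 1 :=
  stmt1_general h r d m hh hdh1 hm1 hm
end

section
/- The Milnor number μ = ∑_{i=1}^{h} (e_i - 1)·r_i - n + 1 of an irreducible plane curve singularity is even. -/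
/-!
Reducing modulo 2, each summand satisfies `(d i / d (i+1) - 1) * r i ≡ d i - d (i+1)`,
because `d (i+1) = gcd (d i) (r i)` and the cofactors `d i / d (i+1)`, `r i / d (i+1)` are
coprime, so not both even. The sum therefore telescopes to `d 1 - d (h+1) = r 0 - 1`.
-/

lemma Nat.Coprime.zmod_two_sub_one_mul_sub_one {q s : ℕ} (hqs : q.Coprime s) :
    ((q : ZMod 2) - 1) * ((s : ZMod 2) - 1) = 0 := by
  rcases Nat.even_or_odd q with hq | hq
  · rcases Nat.even_or_odd s with hs | hs
    · exact absurd hqs (Nat.not_coprime_of_dvd_of_dvd one_lt_two hq.two_dvd hs.two_dvd)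
    · rw [hs.natCast_zmod_two, sub_self, mul_zero]
  · rw [hq.natCast_zmod_two, sub_self, zero_mul]

lemma Nat.div_gcd_sub_one_mul_eq_sub_gcd_zmod_two (a c : ℕ) :
    (((a / a.gcd c : ℕ) : ZMod 2) - 1) * c = a - a.gcd c := by
  rcases Nat.eq_zero_or_pos (a.gcd c) with hg | hg
  · obtain ⟨rfl, rfl⟩ := Nat.gcd_eq_zero_iff.mp hg
    simp
  obtain ⟨q, s, hqs, ha, hc⟩ := Nat.exists_coprime a c
  have key := hqs.zmod_two_sub_one_mul_sub_one
  set g := a.gcd c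
  rw [Nat.div_eq_of_eq_mul_left hg ha, hc, ha]
  push_cast
  linear_combination (g : ZMod 2) * key

lemma Finset.sum_Icc_sub_succ_eq {G : Type*} [AddCommGroup G] (f : ℕ → G) {m n : ℕ}
    (hmn : m ≤ n + 1) : ∑ i ∈ Icc m n, (f i - f (i + 1)) = f m - f (n + 1) := by
  rw [← Finset.Ico_add_one_right_eq_Icc, ← neg_sub, ← Finset.sum_Ico_sub (f := f) hmn,
    ← Finset.sum_neg_distrib]
  simp only [neg_sub]

theorem stmt2_general (h : ℕ) (r d : ℕ → ℕ)
    (hd1 : d 1 = r 0)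
    (hd : ∀ k, 1 ≤ k → k ≤ h → d (k + 1) = Nat.gcd (d k) (r k))
    (hdh1 : d (h + 1) = 1) :
    Even ((∑ i ∈ Finset.Icc 1 h, (((d i / d (i + 1) : ℕ) : ℤ) - 1) * (r i : ℤ))
      - (r 0 : ℤ) + 1) := by
  rw [← ZMod.intCast_eq_zero_iff_even]
  simp only [Int.cast_add, Int.cast_sub, Int.cast_sum, Int.cast_mul, Int.cast_natCast,
    Int.cast_one]
  have hterm : ∀ i ∈ Finset.Icc 1 h,
      (((d i / d (i + 1) : ℕ) : ZMod 2) - 1) * (r i : ZMod 2) = d i - d (i + 1) := by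
    intro i hi
    obtain ⟨hi1, hih⟩ := Finset.mem_Icc.mp hi
    rw [hd i hi1 hih]
    exact Nat.div_gcd_sub_one_mul_eq_sub_gcd_zmod_two _ _
  rw [Finset.sum_congr rfl hterm,
    Finset.sum_Icc_sub_succ_eq (fun i => (d i : ZMod 2)) (by omega), hd1, hdh1]
  push_cast
  ring

/-- The Milnor number `μ = ∑_{i=1}^{h} (e i - 1) * r i - n + 1` of an
irreducible plane curve singularity (with `n = r 0`, `d 1 = r 0`,
`d (k+1) = gcd (d k) (r k)`, `d (h+1) = 1`, `e i = d i / d (i+1)`, the `d`-sequence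
strictly decreasing, and `r (k+1) * d (k+1) > r k * d k` for all `k`) is even. -/
theorem stmt2 (h : ℕ) (r d : ℕ → ℕ) (hh : 1 ≤ h)
    (hrpos : ∀ k, k ≤ h → 0 < r k)
    (hrmono : ∀ k, k ≤ h - 1 → r k < r (k + 1))
    (hd1 : d 1 = r 0)
    (hd : ∀ k, 1 ≤ k → k ≤ h → d (k + 1) = Nat.gcd (d k) (r k))
    (hdh1 : d (h + 1) = 1)
    (hddec : ∀ k, 1 ≤ k → k ≤ h → d (k + 1) < d k)
    (hstar : ∀ k, 1 ≤ k → k ≤ h - 1 → r k * d k < r (k + 1) * d (k + 1)) :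
    Even ((∑ i ∈ Finset.Icc 1 h, (((d i / d (i + 1) : ℕ) : ℤ) - 1) * (r i : ℤ))
      - (r 0 : ℤ) + 1) :=
  stmt2_general h r d hd1 hd hdh1
end

section
/- Let r_0, ..., r_h be positive integers with d_1 = r_0, d_{k+1} = gcd(d_k, r_k), satisfying d_{h+1} = 1 and r_{k+1}·d_{k+1} > r_k·d_k for all 1 ≤ k ≤ h−1, and such that for all k, r_k·(d_k/d_{k+1}) ∈ ⟨r_0, ..., r_{k-1}⟩. Then r_0, ..., r_h form a minimal system of generators of the semigroup ⟨r_0,...,r_h⟩ if and only if d_1 > d_2 > ... > d_h > d_{h+1} = 1. -/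
/-! `d k = gcd (r 0, ..., r (k-1))` divides every element of `⟨r 0, ..., r (k-1)⟩`, so
`r k ∈ ⟨r 0, ..., r (k-1)⟩` forces `d (k+1) = gcd (d k) (r k) = d k`. Conversely, if
`d (k+1) = d k` then `r k = r k * (d k / d (k+1))` lies in that semigroup by hypothesis. Since
`d (k+1) ∣ d k`, at each step the chain either stays constant or drops strictly. -/

/-- `x` belongs to the subsemigroup of `ℕ` generated by `r 0, ..., r (k-1)`
(nonnegative integer combinations). -/
def InSemigroupGenBy (r : ℕ → ℕ) (k x : ℕ) : Prop :=
  ∃ a : ℕ → ℕ, x = ∑ i ∈ Finset.range k, a i * r i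

theorem InSemigroupGenBy.dvd_of_forall_dvd {r : ℕ → ℕ} {k x g : ℕ} (hg : ∀ i < k, g ∣ r i)
    (hx : InSemigroupGenBy r k x) : g ∣ x := by
  obtain ⟨a, rfl⟩ := hx
  exact Finset.dvd_sum fun i hi => (hg i (Finset.mem_range.mp hi)).mul_left _

def IsGcdChain (h : ℕ) (r d : ℕ → ℕ) : Prop :=
  d 1 = r 0 ∧ ∀ k, 1 ≤ k → k ≤ h → d (k + 1) = Nat.gcd (d k) (r k)

namespace IsGcdChain

variable {h : ℕ} {r d : ℕ → ℕ}

theorem dvd_of_lt (hc : IsGcdChain h r d) {k : ℕ} (hk1 : 1 ≤ k) (hkh : k ≤ h + 1) :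
    ∀ i < k, d k ∣ r i := by
  induction k, hk1 using Nat.le_induction with
  | base =>
    intro i hi
    obtain rfl : i = 0 := by omega
    rw [hc.1]
  | succ k hk1 ih =>
    intro i hi
    rw [hc.2 k hk1 (by omega)]
    rcases Nat.lt_succ_iff_lt_or_eq.mp hi with hik | rfl
    · exact (Nat.gcd_dvd_left _ _).trans (ih (by omega) i hik)
    · exact Nat.gcd_dvd_right _ _

theorem pos (hc : IsGcdChain h r d) (hr : ∀ k ≤ h, 0 < r k) {k : ℕ} (hk1 : 1 ≤ k)
    (hkh : k ≤ h + 1) : 0 < d k := by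
  induction k, hk1 using Nat.le_induction with
  | base => rw [hc.1]; exact hr 0 (by omega)
  | succ k hk1 _ =>
    rw [hc.2 k hk1 (by omega)]
    exact Nat.gcd_pos_of_pos_right _ (hr k (by omega))

theorem succ_le (hc : IsGcdChain h r d) (hr : ∀ k ≤ h, 0 < r k) {k : ℕ} (hk1 : 1 ≤ k)
    (hkh : k ≤ h) : d (k + 1) ≤ d k := by
  refine Nat.le_of_dvd (hc.pos hr hk1 (by omega)) ?_
  rw [hc.2 k hk1 hkh]
  exact Nat.gcd_dvd_left _ _

theorem inSemigroupGenBy_iff (hc : IsGcdChain h r d) (hr : ∀ k ≤ h, 0 < r k) {k : ℕ}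
    (hk1 : 1 ≤ k) (hkh : k ≤ h) (hmem : InSemigroupGenBy r k (r k * (d k / d (k + 1)))) :
    InSemigroupGenBy r k (r k) ↔ d (k + 1) = d k := by
  constructor
  · intro hin
    rw [hc.2 k hk1 hkh]
    exact Nat.gcd_eq_left (hin.dvd_of_forall_dvd (hc.dvd_of_lt hk1 (by omega)))
  · intro heq
    rwa [heq, Nat.div_self (hc.pos hr hk1 (by omega)), mul_one] at hmem

theorem not_inSemigroupGenBy_iff (hc : IsGcdChain h r d) (hr : ∀ k ≤ h, 0 < r k) {k : ℕ}
    (hk1 : 1 ≤ k) (hkh : k ≤ h) (hmem : InSemigroupGenBy r k (r k * (d k / d (k + 1)))) :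
    ¬ InSemigroupGenBy r k (r k) ↔ d (k + 1) < d k := by
  rw [hc.inSemigroupGenBy_iff hr hk1 hkh hmem, (hc.succ_le hr hk1 hkh).lt_iff_ne]

end IsGcdChain

theorem stmt5_general (h : ℕ) (r d : ℕ → ℕ)
    (hrpos : ∀ k, k ≤ h → 0 < r k)
    (hd1 : d 1 = r 0)
    (hd : ∀ k, 1 ≤ k → k ≤ h → d (k + 1) = Nat.gcd (d k) (r k))
    (hmem : ∀ k, 1 ≤ k → k ≤ h → InSemigroupGenBy r k (r k * (d k / d (k + 1)))) :
    (∀ k, 1 ≤ k → k ≤ h → ¬ InSemigroupGenBy r k (r k)) ↔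
      (∀ k, 1 ≤ k → k ≤ h → d (k + 1) < d k) := by
  have hc : IsGcdChain h r d := ⟨hd1, hd⟩
  refine forall_congr' fun k => forall_congr' fun hk1 => forall_congr' fun hkh => ?_
  exact hc.not_inSemigroupGenBy_iff hrpos hk1 hkh (hmem k hk1 hkh)

/-- Let `r 0, ..., r h` be positive integers with `d 1 = r 0`,
`d (k+1) = gcd (d k) (r k)`, `d (h+1) = 1`, satisfying
`r (k+1) * d (k+1) > r k * d k` for `1 ≤ k ≤ h-1`, and such that
`r k * (d k / d (k+1)) ∈ ⟨r 0, ..., r (k-1)⟩` for all `1 ≤ k ≤ h`. Then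
`r 0, ..., r h` is a minimal system of generators of `⟨r 0, ..., r h⟩`
(i.e. `r k ∉ ⟨r 0, ..., r (k-1)⟩` for `k = 1, ..., h`) if and only if
`d 1 > d 2 > ... > d h > d (h+1) = 1`. -/
theorem stmt5 (h : ℕ) (r d : ℕ → ℕ) (hh : 1 ≤ h)
    (hrpos : ∀ k, k ≤ h → 0 < r k)
    (hd1 : d 1 = r 0)
    (hd : ∀ k, 1 ≤ k → k ≤ h → d (k + 1) = Nat.gcd (d k) (r k))
    (hdh1 : d (h + 1) = 1)
    (hstar : ∀ k, 1 ≤ k → k ≤ h - 1 → r k * d k < r (k + 1) * d (k + 1))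
    (hmem : ∀ k, 1 ≤ k → k ≤ h → InSemigroupGenBy r k (r k * (d k / d (k + 1)))) :
    (∀ k, 1 ≤ k → k ≤ h → ¬ InSemigroupGenBy r k (r k)) ↔
      (∀ k, 1 ≤ k → k ≤ h → d (k + 1) < d k) :=
  stmt5_general h r d hrpos hd1 hd hmem
end

section
/- For every h ≥ 1, if f is an irreducible plane curve singularity whose semigroup has length h with last minimal generator r_h, then r_h ≥ (5/3)·2^{2h−1} − 1/3, i.e., 3·r_h ≥ 5·2^{2h−1} − 1. -/
/-- For every `h ≥ 1`, if the semigroup `⟨r 0, ..., r h⟩` of an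
irreducible plane curve singularity is minimally generated of length `h`
(`d 1 = r 0`, `d (k+1) = gcd (d k) (r k)`, `d (h+1) = 1`, `d`-sequence strictly
decreasing, `r (k+1) * d (k+1) > r k * d k`), then the last minimal generator
satisfies `r h ≥ (5/3)·2^(2h-1) - 1/3`, i.e. `3 * r h ≥ 5 * 2^(2h-1) - 1`. -/
theorem stmt9 (h : ℕ) (r d : ℕ → ℕ) (hh : 1 ≤ h)
    (hrpos : ∀ k, k ≤ h → 0 < r k)
    (hrmono : ∀ k, k ≤ h - 1 → r k < r (k + 1))
    (hd1 : d 1 = r 0)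
    (hd : ∀ k, 1 ≤ k → k ≤ h → d (k + 1) = Nat.gcd (d k) (r k))
    (hdh1 : d (h + 1) = 1)
    (hddec : ∀ k, 1 ≤ k → k ≤ h → d (k + 1) < d k)
    (hstar : ∀ k, 1 ≤ k → k ≤ h - 1 → r k * d k < r (k + 1) * d (k + 1)) :
    5 * 2 ^ (2 * h - 1) - 1 ≤ 3 * r h := by
  -- divisibility facts
  have hdd : ∀ k, 1 ≤ k → k ≤ h → d (k + 1) ∣ d k := by
    intro k h1 h2; rw [hd k h1 h2]; exact Nat.gcd_dvd_left _ _
  have hdr : ∀ k, 1 ≤ k → k ≤ h → d (k + 1) ∣ r k := by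
    intro k h1 h2; rw [hd k h1 h2]; exact Nat.gcd_dvd_right _ _
  -- each step at least halves
  have hdouble : ∀ k, 1 ≤ k → k ≤ h → 2 * d (k + 1) ≤ d k := by
    intro k h1 h2
    have h3 := hdd k h1 h2
    have h4 := hddec k h1 h2
    have hpos : 0 < d (k + 1) := by
      rcases Nat.eq_zero_or_pos (d (k + 1)) with h0 | h0
      · have h5 := hd k h1 h2
        rw [h0] at h5
        have := Nat.eq_zero_of_gcd_eq_zero_left h5.symm
        omega
      · exact h0
    obtain ⟨m, hm⟩ := h3
    have hm2 : 2 ≤ m := by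
      by_contra h'
      push_neg at h'
      interval_cases m <;> omega
    calc 2 * d (k + 1) = d (k + 1) * 2 := by ring
      _ ≤ d (k + 1) * m := Nat.mul_le_mul_left _ hm2
      _ = d k := hm.symm
  -- lower bounds on the d's
  have hpow : ∀ i, i ≤ h → 2 ^ i ≤ d (h + 1 - i) := by
    intro i
    induction i with
    | zero => intro _; simp [hdh1]
    | succ n ih =>
      intro hn
      have h1 : n ≤ h := by omega
      have hih := ih h1
      have hdo := hdouble (h - n) (by omega) (by omega)
      have e1 : h - n + 1 = h + 1 - n := by omega
      have e2 : h + 1 - (n + 1) = h - n := by omega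
      rw [e1] at hdo
      rw [e2]
      calc 2 ^ (n + 1) = 2 * 2 ^ n := by ring
        _ ≤ 2 * d (h + 1 - n) := by omega
        _ ≤ d (h - n) := hdo
  -- the key recursive step
  have hstep : ∀ k, 1 ≤ k → k + 1 ≤ h → 2 * r k + d (k + 2) ≤ r (k + 1) := by
    intro k h1 h2
    have hs := hstar k h1 (by omega)
    have hdvd_a : d (k + 1) * d (k + 2) ∣ r (k + 1) * d (k + 1) := by
      rw [mul_comm (r (k + 1))]
      exact mul_dvd_mul dvd_rfl (hdr (k + 1) (by omega) h2)
    have hdvd_b : d (k + 1) * d (k + 2) ∣ r k * d k :=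
      mul_dvd_mul (hdr k h1 (by omega))
        (dvd_trans (hdd (k + 1) (by omega) h2) (hdd k h1 (by omega)))
    have p1 : 2 ^ (h - k) ≤ d (k + 1) := by
      have hp := hpow (h - k) (by omega)
      have e : h + 1 - (h - k) = k + 1 := by omega
      rwa [e] at hp
    have p2 : 2 ^ (h - k - 1) ≤ d (k + 2) := by
      have hp := hpow (h - k - 1) (by omega)
      have e : h + 1 - (h - k - 1) = k + 2 := by omega
      rwa [e] at hp
    have q1 : 0 < 2 ^ (h - k) := Nat.pow_pos (by omega)
    have q2 : 0 < 2 ^ (h - k - 1) := Nat.pow_pos (by omega)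
    have hpos1 : 0 < d (k + 1) := by omega
    have hpos2 : 0 < d (k + 2) := by omega
    have hge : r k * d k + d (k + 1) * d (k + 2) ≤ r (k + 1) * d (k + 1) := by
      obtain ⟨a, ha⟩ := hdvd_a
      obtain ⟨b, hb⟩ := hdvd_b
      rw [ha, hb]
      rw [ha, hb] at hs
      have hba : b < a := by
        by_contra h'
        push_neg at h'
        exact absurd hs (not_lt.mpr (Nat.mul_le_mul_left _ h'))
      calc d (k + 1) * d (k + 2) * b + d (k + 1) * d (k + 2)
          = d (k + 1) * d (k + 2) * (b + 1) := by ring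
        _ ≤ d (k + 1) * d (k + 2) * a := Nat.mul_le_mul_left _ (by omega)
    have hdk : 2 * d (k + 1) ≤ d k := hdouble k h1 (by omega)
    have hrk : 0 < r k := hrpos k (by omega)
    have hmul : (2 * r k + d (k + 2)) * d (k + 1) ≤ r (k + 1) * d (k + 1) := by
      have h5 : 2 * d (k + 1) * r k ≤ d k * r k := Nat.mul_le_mul_right _ hdk
      nlinarith [hge, h5]
    exact Nat.le_of_mul_le_mul_right hmul hpos1
  -- base case : 3 * r 1 ≥ 9 * 2^(h-1)
  have hbase : 9 * 2 ^ (h - 1) ≤ 3 * r 1 := by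
    have h01 : r 0 < r 1 := hrmono 0 (by omega)
    have hd2r : d 2 ∣ r 1 := hdr 1 (le_refl 1) hh
    have hd2d : d 2 ∣ d 1 := hdd 1 (le_refl 1) hh
    have hd2pos : 2 ^ (h - 1) ≤ d 2 := by
      have hp := hpow (h - 1) (by omega)
      have e : h + 1 - (h - 1) = 2 := by omega
      rwa [e] at hp
    have hd1b : 2 ^ h ≤ d 1 := by
      have hp := hpow h (le_refl h)
      have e : h + 1 - h = 1 := by omega
      rwa [e] at hp
    have q2 : 0 < 2 ^ (h - 1) := Nat.pow_pos (by omega)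
    have h1 : d 1 + d 2 ≤ r 1 := by
      obtain ⟨a, ha⟩ := hd2r
      obtain ⟨b, hb⟩ := hd2d
      have hlt : d 1 < r 1 := by omega
      rw [ha, hb] at hlt ⊢
      have hba : b < a := by
        by_contra h'
        push_neg at h'
        exact absurd hlt (not_lt.mpr (Nat.mul_le_mul_left _ h'))
      calc d 2 * b + d 2 = d 2 * (b + 1) := by ring
        _ ≤ d 2 * a := Nat.mul_le_mul_left _ (by omega)
    have hx : 2 ^ (h - 1) * 2 = 2 ^ h := by
      rw [← pow_succ]
      congr 1
      omega
    omega
  -- main induction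
  have main : ∀ k, 1 ≤ k → k ≤ h → (10 * 4 ^ (k - 1) - 1) * 2 ^ (h - k) ≤ 3 * r k := by
    intro k
    induction k with
    | zero => omega
    | succ n ih =>
      intro h1 h2
      rcases Nat.eq_zero_or_pos n with h0 | h0
      · subst h0
        simpa using hbase
      · have ihn := ih h0 (by omega)
        have hst := hstep n h0 h2
        have pD : 2 ^ (h - n - 1) ≤ d (n + 2) := by
          have hp := hpow (h - n - 1) (by omega)
          have e : h + 1 - (h - n - 1) = n + 2 := by omega
          rwa [e] at hp
        obtain ⟨B, hB⟩ : ∃ B, 4 ^ (n - 1) = B + 1 :=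
          ⟨4 ^ (n - 1) - 1, by
            have hp4 : 0 < (4:ℕ) ^ (n - 1) := Nat.pow_pos (by omega)
            omega⟩
        have e4 : 4 ^ (n + 1 - 1) = (B + 1) * 4 := by
          rw [Nat.add_sub_cancel, ← hB, ← pow_succ]
          congr 1
          omega
        have e2 : 2 ^ (h - n) = 2 ^ (h - (n + 1)) * 2 := by
          rw [← pow_succ]
          congr 1
          omega
        rw [hB] at ihn
        rw [e4]
        rw [e2] at ihn
        set t := 2 ^ (h - (n + 1)) with ht
        have htD : t ≤ d (n + 2) := by
          have e : h - n - 1 = h - (n + 1) := by omega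
          rwa [e] at pD
        have g1 : (10 * (B + 1) - 1) * (t * 2) = (10 * B + 9) * (t * 2) := by
          congr 1 <;> omega
        have g2 : (10 * ((B + 1) * 4) - 1) * t = (40 * B + 39) * t := by
          congr 1 <;> omega
        rw [g1] at ihn
        rw [g2]
        nlinarith [ihn, hst, htD]
  have hfin := main h hh (le_refl h)
  have e0 : h - h = 0 := by omega
  rw [e0, pow_zero, mul_one] at hfin
  have e1 : 2 ^ (2 * h - 1) = 4 ^ (h - 1) * 2 := by
    rw [show (4:ℕ) = 2 ^ 2 from rfl, ← pow_mul, ← pow_succ]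
    congr 1
    omega
  rw [e1]
  have hp : 0 < 4 ^ (h - 1) := Nat.pow_pos (by omega)
  generalize hX : (4:ℕ) ^ (h - 1) = X at hfin hp ⊢
  omega
end

section
/- For every h ≥ 1, the Milnor number μ_{h+1} of an irreducible plane curve singularity whose semigroup has length h satisfies μ_{h+1} ≥ (5/3)·2^{2h} − 3·2^h + 4/3, i.e., 3·μ_{h+1} ≥ 5·2^{2h} − 9·2^h + 4. -/
/-- For every `h ≥ 1`, the Milnor number
`μ = ∑_{i=1}^{h} (d i / d (i+1) - 1) * r i - r 0 + 1` of an irreducible plane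
curve singularity whose semigroup has length `h` satisfies
`μ ≥ (5/3)·2^(2h) - 3·2^h + 4/3`, i.e. `3·μ ≥ 5·2^(2h) - 9·2^h + 4`. -/
theorem stmt10 (h : ℕ) (r d : ℕ → ℕ) (hh : 1 ≤ h)
    (hrpos : ∀ k, k ≤ h → 0 < r k)
    (hrmono : ∀ k, k ≤ h - 1 → r k < r (k + 1))
    (hd1 : d 1 = r 0)
    (hd : ∀ k, 1 ≤ k → k ≤ h → d (k + 1) = Nat.gcd (d k) (r k))
    (hdh1 : d (h + 1) = 1)
    (hddec : ∀ k, 1 ≤ k → k ≤ h → d (k + 1) < d k)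
    (hstar : ∀ k, 1 ≤ k → k ≤ h - 1 → r k * d k < r (k + 1) * d (k + 1)) :
    (5 : ℤ) * 2 ^ (2 * h) - 9 * 2 ^ h + 4 ≤
      3 * ((∑ i ∈ Finset.Icc 1 h, (((d i / d (i + 1) : ℕ) : ℤ) - 1) * (r i : ℤ))
        - (r 0 : ℤ) + 1) := by
  -- divisibility facts
  have hdvd : ∀ k, 1 ≤ k → k ≤ h → d (k + 1) ∣ d k ∧ d (k + 1) ∣ r k := by
    intro k h1 h2
    rw [hd k h1 h2]
    exact ⟨Nat.gcd_dvd_left _ _, Nat.gcd_dvd_right _ _⟩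
  -- d k ≥ 2 * d (k+1)
  have hd2 : ∀ k, 1 ≤ k → k ≤ h → 2 * d (k + 1) ≤ d k := by
    intro k h1 h2
    obtain ⟨c, hc⟩ := (hdvd k h1 h2).1
    have hlt := hddec k h1 h2
    have hc2 : 2 ≤ c := by
      by_contra hcon
      interval_cases c <;> omega
    calc 2 * d (k + 1) = d (k + 1) * 2 := by ring
      _ ≤ d (k + 1) * c := Nat.mul_le_mul_left _ hc2
      _ = d k := hc.symm
  -- lower bound on d
  have hdlow : ∀ j, j ≤ h → 2 ^ j ≤ d (h + 1 - j) := by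
    intro j
    induction j with
    | zero => intro _; simp [hdh1]
    | succ j ih =>
      intro hj
      have ihj := ih (by omega)
      set k := h - j with hk
      have he : h + 1 - j = k + 1 := by omega
      have he2 : h + 1 - (j + 1) = k := by omega
      rw [he] at ihj
      rw [he2]
      have h2 := hd2 k (by omega) (by omega)
      calc 2 ^ (j + 1) = 2 * 2 ^ j := by ring
        _ ≤ 2 * d (k + 1) := by omega
        _ ≤ d k := h2
  have hdlow' : ∀ k, 1 ≤ k → k ≤ h + 1 → 2 ^ (h + 1 - k) ≤ d k := by
    intro k h1 h2
    have := hdlow (h + 1 - k) (by omega)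
    have he : h + 1 - (h + 1 - k) = k := by omega
    rwa [he] at this
  have hdpos : ∀ k, 1 ≤ k → k ≤ h + 1 → 0 < d k := by
    intro k h1 h2
    have := hdlow' k h1 h2
    have h0 : 0 < 2 ^ (h + 1 - k) := Nat.pow_pos (by norm_num)
    omega
  -- r k = (r k / d (k+1)) * d (k+1)
  have hra : ∀ k, 1 ≤ k → k ≤ h → r k = r k / d (k + 1) * d (k + 1) :=
    fun k h1 h2 => (Nat.div_mul_cancel (hdvd k h1 h2).2).symm
  -- quotient lower bound: 3 a k + 1 ≥ 5 * 2^(2k-1)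
  have ha : ∀ k, 1 ≤ k → k ≤ h → 5 * 2 ^ (2 * k - 1) ≤ 3 * (r k / d (k + 1)) + 1 := by
    intro k
    induction k with
    | zero => omega
    | succ k ih =>
      intro _ hkh
      rcases Nat.eq_zero_or_pos k with hk0 | hk1
      · subst hk0
        -- base case : a 1 ≥ 3
        have hx : r 1 = r 1 / d 2 * d 2 := hra 1 le_rfl hh
        have h01 : r 0 < r 1 := hrmono 0 (by omega)
        have h22 : 2 * d 2 ≤ d 1 := hd2 1 le_rfl hh
        have hx3 : 3 ≤ r 1 / d 2 := by
          by_contra hcon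
          have hle : r 1 / d 2 ≤ 2 := by omega
          have : r 1 / d 2 * d 2 ≤ 2 * d 2 := Nat.mul_le_mul_right _ hle
          linarith
        norm_num
        linarith [hx3]
      · have hih := ih hk1 (by omega)
        have hs := hstar k hk1 (by omega)
        have hrk := hra k hk1 (by omega)
        have hrk1 := hra (k + 1) (by omega) hkh
        set a := r k / d (k + 1) with hadef
        set b := r (k + 1) / d (k + 2) with hbdef
        rw [hrk, hrk1] at hs
        have hpos1 : 0 < d (k + 1) := hdpos (k + 1) (by omega) (by omega)
        have hpos2 : 0 < d (k + 2) := hdpos (k + 2) (by omega) (by omega)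
        have hs' : a * d k < b * d (k + 2) := by
          have h1 : a * d k * d (k + 1) < b * d (k + 2) * d (k + 1) := by
            calc a * d k * d (k + 1) = a * d (k + 1) * d k := by ring
              _ < b * d (k + 2) * d (k + 1) := hs
          exact Nat.lt_of_mul_lt_mul_right h1
        have hdk : 4 * d (k + 2) ≤ d k := by
          have h1 := hd2 k hk1 (by omega)
          have h2 : 2 * d (k + 2) ≤ d (k + 1) := hd2 (k + 1) (by omega) hkh
          omega
        have hb : 4 * a < b := by
          have h1 : a * (4 * d (k + 2)) ≤ a * d k := Nat.mul_le_mul_left _ hdk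
          have h2 : 4 * a * d (k + 2) < b * d (k + 2) := by
            calc 4 * a * d (k + 2) = a * (4 * d (k + 2)) := by ring
              _ ≤ a * d k := h1
              _ < b * d (k + 2) := hs'
          exact Nat.lt_of_mul_lt_mul_right h2
        have he : 2 * (k + 1) - 1 = (2 * k - 1) + 2 := by omega
        rw [he, pow_add]
        have : 5 * (2 ^ (2 * k - 1) * 2 ^ 2) = 4 * (5 * 2 ^ (2 * k - 1)) := by ring
        rw [this]
        linarith
  -- 3 r k + 2^(h-k) ≥ 5 * 2^(h+k-1)
  have hr3 : ∀ k, 1 ≤ k → k ≤ h → 5 * 2 ^ (h + k - 1) ≤ 3 * r k + 2 ^ (h - k) := by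
    intro k h1 h2
    have hdl : 2 ^ (h - k) ≤ d (k + 1) := by
      have := hdlow' (k + 1) (by omega) (by omega)
      have he : h + 1 - (k + 1) = h - k := by omega
      rwa [he] at this
    calc 5 * 2 ^ (h + k - 1) = 5 * 2 ^ (2 * k - 1) * 2 ^ (h - k) := by
          rw [mul_assoc, ← pow_add]
          congr 2
          omega
      _ ≤ (3 * (r k / d (k + 1)) + 1) * 2 ^ (h - k) :=
          Nat.mul_le_mul_right _ (ha k h1 h2)
      _ = 3 * (r k / d (k + 1) * 2 ^ (h - k)) + 2 ^ (h - k) := by ring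
      _ ≤ 3 * (r k / d (k + 1) * d (k + 1)) + 2 ^ (h - k) := by
          have := Nat.mul_le_mul_left (r k / d (k + 1)) hdl
          linarith
      _ = 3 * r k + 2 ^ (h - k) := by rw [← hra k h1 h2]
  -- n i ≥ 2
  have hn2 : ∀ i, 1 ≤ i → i ≤ h → 2 ≤ d i / d (i + 1) := by
    intro i h1 h2
    rw [Nat.le_div_iff_mul_le (hdpos (i + 1) (by omega) (by omega))]
    calc 2 * d (i + 1) ≤ d i := hd2 i h1 h2
      _ = d i := rfl
  -- first term estimate
  have hfirst : 3 * 2 ^ (h - 1) + 3 * r 0 ≤ 3 * ((d 1 / d 2 - 1) * r 1) := by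
    have hn := hn2 1 le_rfl hh
    set n := d 1 / d 2 with hndef
    set x := r 1 / d 2 with hxdef
    have hdn : d 1 = n * d 2 := (Nat.div_mul_cancel (hdvd 1 le_rfl hh).1).symm
    have hx : r 1 = x * d 2 := hra 1 le_rfl hh
    have h01 : r 0 < r 1 := hrmono 0 (by omega)
    have h22 : 2 * d 2 ≤ d 1 := hd2 1 le_rfl hh
    have hx3 : 3 ≤ x := by
      by_contra hcon
      have hle : x ≤ 2 := by omega
      have : x * d 2 ≤ 2 * d 2 := Nat.mul_le_mul_right _ hle
      linarith
    have hdl : 2 ^ (h - 1) ≤ d 2 := by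
      have := hdlow' 2 (by omega) (by omega)
      have he : h + 1 - 2 = h - 1 := by omega
      rwa [he] at this
    have hN : 1 ≤ n - 1 := by omega
    set N := n - 1 with hNdef
    have hnN : n = N + 1 := by omega
    calc 3 * 2 ^ (h - 1) + 3 * r 0
        ≤ 3 * d 2 + 3 * ((N + 1) * d 2) := by
          have : r 0 = (N + 1) * d 2 := by rw [← hnN, ← hdn, hd1]
          rw [this]; linarith
      _ = (3 * N + 6) * d 2 := by ring
      _ ≤ 3 * N * 3 * d 2 := Nat.mul_le_mul_right _ (by omega)
      _ = 3 * (N * (3 * d 2)) := by ring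
      _ ≤ 3 * (N * (x * d 2)) := by
          have h1 : 3 * d 2 ≤ x * d 2 := Nat.mul_le_mul_right _ hx3
          have h2 : N * (3 * d 2) ≤ N * (x * d 2) := Nat.mul_le_mul_left _ h1
          linarith
      _ = 3 * (N * r 1) := by rw [← hx]
  -- main induction on partial sums
  have hsum : ∀ m, 1 ≤ m → m ≤ h →
      (5 : ℤ) * 2 ^ (h + m) + 2 ^ (h - m) + 2 * 2 ^ (h - 1) + 3 * (r 0 : ℤ) ≤
        3 * (∑ i ∈ Finset.Icc 1 m, (((d i / d (i + 1) : ℕ) : ℤ) - 1) * (r i : ℤ))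
          + 5 * 2 ^ (h + 1) := by
    intro m
    induction m with
    | zero => omega
    | succ m ih =>
      intro _ hmh
      rcases Nat.eq_zero_or_pos m with hm0 | hm1
      · subst hm0
        have e0 : (0 : ℕ) + 1 = 1 := rfl
        rw [e0, Finset.Icc_self, Finset.sum_singleton,
          show (1 : ℕ) + 1 = 2 from rfl]
        have hn' : 2 ≤ d 1 / d 2 := hn2 1 le_rfl hh
        have h1le : 1 ≤ d 1 / d 2 := le_trans one_le_two hn'
        have h1' : (3 : ℤ) * 2 ^ (h - 1) + 3 * (r 0 : ℤ) ≤
            3 * ((((d 1 / d 2 : ℕ) : ℤ) - 1) * (r 1 : ℤ)) := by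
          calc (3 : ℤ) * 2 ^ (h - 1) + 3 * (r 0 : ℤ)
              = ((3 * 2 ^ (h - 1) + 3 * r 0 : ℕ) : ℤ) := by push_cast; ring
            _ ≤ ((3 * ((d 1 / d 2 - 1) * r 1) : ℕ) : ℤ) := (Nat.cast_le (α := ℤ)).mpr hfirst
            _ = 3 * ((((d 1 / d 2 : ℕ) : ℤ) - 1) * (r 1 : ℤ)) := by
                push_cast [Nat.cast_sub h1le]
                ring
        linarith [h1']
      · have ihm := ih hm1 (by omega)
        rw [Finset.sum_Icc_succ_top (by omega : 1 ≤ m + 1)]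
        have hn := hn2 (m + 1) (by omega) hmh
        have hrb := hr3 (m + 1) (by omega) hmh
        have hrbz : (5 : ℤ) * 2 ^ (h + m) ≤ 3 * (r (m + 1) : ℤ) + 2 ^ (h - (m + 1)) := by
          have he : h + (m + 1) - 1 = h + m := by omega
          rw [he] at hrb
          exact_mod_cast hrb
        have hT : (r (m + 1) : ℤ) ≤ (((d (m + 1) / d (m + 2) : ℕ) : ℤ) - 1) * (r (m + 1) : ℤ) := by
          have h1 : (1 : ℤ) ≤ ((d (m + 1) / d (m + 2) : ℕ) : ℤ) - 1 := by
            have : (2 : ℤ) ≤ ((d (m + 1) / d (m + 2) : ℕ) : ℤ) := by exact_mod_cast hn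
            linarith
          exact le_mul_of_one_le_left (by positivity) h1
        have e1 : (2 : ℤ) ^ (h + (m + 1)) = 2 * 2 ^ (h + m) := by
          rw [show h + (m + 1) = (h + m) + 1 by omega, pow_succ]; ring
        have e2 : (2 : ℤ) ^ (h - m) = 2 * 2 ^ (h - (m + 1)) := by
          rw [show h - m = (h - (m + 1)) + 1 by omega, pow_succ]; ring
        rw [e1]
        rw [e2] at ihm
        linarith
  -- conclude
  have H := hsum h hh le_rfl
  rw [Nat.sub_self, pow_zero] at H
  have e1 : (2 : ℤ) ^ (2 * h) = 2 ^ (h + h) := by rw [show 2 * h = h + h by omega]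
  have e2 : (2 : ℤ) ^ h = 2 * 2 ^ (h - 1) := by
    conv_lhs => rw [show h = (h - 1) + 1 by omega]
    rw [pow_succ]; ring
  have e3 : (2 : ℤ) ^ (h + 1) = 2 ^ h * 2 := pow_succ 2 h
  rw [e1]
  linarith
end

section
/- For each h ≥ 1, the sequence r_0 = 2^h and r_k = 2^{h−k}·((5/3)·2^{2k−1} − 1/3) for 1 ≤ k ≤ h consists of positive integers, its gcd-sequence is d_k = 2^{h+1−k} for 1 ≤ k ≤ h+1 (so d_{h+1} = 1), and it satisfies r_k·d_k < r_{k+1}·d_{k+1} for all 1 ≤ k ≤ h−1. -/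
lemma stmt11_aux (k : ℕ) (hk : 1 ≤ k) :
    ∃ m, 5 * 2 ^ (2 * k - 1) - 1 = 3 * m ∧ m % 2 = 1 := by
  induction k with
  | zero => omega
  | succ n ih =>
    rcases Nat.eq_or_lt_of_le hk with h1 | h1
    · exact ⟨3, by norm_num [← h1], by norm_num⟩
    · obtain ⟨m, hm, hodd⟩ := ih (by omega)
      refine ⟨4 * m + 1, ?_, by omega⟩
      have h2 : 2 * (n + 1) - 1 = (2 * n - 1) + 2 := by omega
      have h3 : 1 ≤ 2 ^ (2 * n - 1) := Nat.one_le_two_pow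
      rw [h2, pow_add]
      omega

lemma stmt11_form (h : ℕ) (r : ℕ → ℕ)
    (hrk : ∀ k, 1 ≤ k → k ≤ h → 3 * r k = 2 ^ (h - k) * (5 * 2 ^ (2 * k - 1) - 1)) :
    ∀ k, 1 ≤ k → k ≤ h → ∃ m, r k = 2 ^ (h - k) * m ∧ m % 2 = 1 ∧
      5 * 2 ^ (2 * k - 1) - 1 = 3 * m := by
  intro k hk1 hkh
  obtain ⟨m, hm, hodd⟩ := stmt11_aux k hk1
  refine ⟨m, ?_, hodd, hm⟩
  have := hrk k hk1 hkh
  rw [hm] at this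
  have : 3 * r k = 3 * (2 ^ (h - k) * m) := by rw [this]; ring
  omega

/-- For each `h ≥ 1`, the sequence `r 0 = 2^h`,
`r k = 2^(h-k) * ((5·2^(2k-1) - 1)/3)` for `1 ≤ k ≤ h` (encoded by
`3 * r k = 2^(h-k) * (5·2^(2k-1) - 1)`, which also expresses that
`(5·2^(2k-1) - 1)/3` is an integer) consists of positive integers, its
gcd-sequence (`d 1 = r 0`, `d (k+1) = gcd (d k) (r k)`) is `d k = 2^(h+1-k)` for
`1 ≤ k ≤ h+1` (so `d (h+1) = 1`), and it satisfies
`r k * d k < r (k+1) * d (k+1)` for all `1 ≤ k ≤ h-1`. -/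
theorem stmt11 (h : ℕ) (hh : 1 ≤ h) (r d : ℕ → ℕ)
    (hr0 : r 0 = 2 ^ h)
    (hrk : ∀ k, 1 ≤ k → k ≤ h → 3 * r k = 2 ^ (h - k) * (5 * 2 ^ (2 * k - 1) - 1))
    (hd1 : d 1 = r 0)
    (hd : ∀ k, 1 ≤ k → k ≤ h → d (k + 1) = Nat.gcd (d k) (r k)) :
    (∀ k, k ≤ h → 0 < r k) ∧
    (∀ k, 1 ≤ k → k ≤ h + 1 → d k = 2 ^ (h + 1 - k)) ∧
    (∀ k, 1 ≤ k → k ≤ h - 1 → r k * d k < r (k + 1) * d (k + 1)) := by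
  have hform := stmt11_form h r hrk
  have hpos : ∀ k, k ≤ h → 0 < r k := by
    intro k hkh
    rcases Nat.eq_zero_or_pos k with h0 | h0
    · subst h0; rw [hr0]; positivity
    · obtain ⟨m, hm, hodd, _⟩ := hform k h0 hkh
      rw [hm]
      have : 0 < 2 ^ (h - k) := Nat.two_pow_pos _
      exact Nat.mul_pos this (by omega)
  -- d k = 2^(h+1-k) by induction
  have hdval : ∀ k, 1 ≤ k → k ≤ h + 1 → d k = 2 ^ (h + 1 - k) := by
    intro k
    induction k with
    | zero => omega
    | succ n ih =>
      intro _ hn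
      rcases Nat.eq_zero_or_pos n with h0 | h0
      · subst h0
        simp [hd1, hr0]
      · have hnh : n ≤ h := by omega
        have hdn := ih h0 (by omega)
        rw [hd n h0 hnh, hdn]
        obtain ⟨m, hm, hodd, _⟩ := hform n h0 hnh
        have he : h + 1 - n = (h - n) + 1 := by omega
        rw [hm, he, pow_succ]
        have : Nat.gcd (2 ^ (h - n) * 2) (2 ^ (h - n) * m) =
            2 ^ (h - n) * Nat.gcd 2 m := Nat.gcd_mul_left _ _ _
        rw [this]
        have : Nat.gcd 2 m = 1 := Nat.coprime_two_left.mpr (Nat.odd_iff.mpr hodd)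
        rw [this, mul_one, show h + 1 - (n + 1) = h - n from by omega]
  refine ⟨hpos, hdval, ?_⟩
  intro k hk1 hkh
  have hk2 : k + 1 ≤ h := by omega
  obtain ⟨m, hm, hodd, heq⟩ := hform k hk1 (by omega)
  obtain ⟨m', hm', hodd', heq'⟩ := hform (k + 1) (by omega) hk2
  -- m' = 4 * m + 1
  have h2k : 2 * (k + 1) - 1 = (2 * k - 1) + 2 := by omega
  have h3 : 1 ≤ 2 ^ (2 * k - 1) := Nat.one_le_two_pow
  have hpow : 2 ^ (2 * (k + 1) - 1) = 4 * 2 ^ (2 * k - 1) := by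
    rw [h2k, pow_add]; ring
  have hm'eq : m' = 4 * m + 1 := by
    rw [hpow] at heq'
    omega
  rw [hdval k hk1 (by omega), hdval (k+1) (by omega) (by omega), hm, hm', hm'eq]
  have he1 : h + 1 - k = (h - (k+1)) + 2 := by omega
  have he2 : h - k = (h - (k+1)) + 1 := by omega
  have he3 : h + 1 - (k+1) = (h - (k+1)) + 1 := by omega
  set e := h - (k+1)
  rw [he1, he2, he3]
  have hpe : 0 < 2 ^ e := Nat.two_pow_pos _
  calc 2 ^ (e+1) * m * 2 ^ (e+2) = 2 ^ e * 2 ^ e * (8 * m) := by ring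
    _ < 2 ^ e * 2 ^ e * (8 * m + 2) := by
        exact Nat.mul_lt_mul_of_pos_left (by omega) (Nat.mul_pos hpe hpe)
    _ = 2 ^ e * (4 * m + 1) * 2 ^ (e+1) := by ring
end
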